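/- arXiv:2412.02783 — 2 statements merged into one kernel-verified Lean document; each statement's English description precedes it below -/
import Mathlib

section
/- Suppose ψ is a Z₁-function (ψ(z, ϑ₁(z)) = 0 for all z), and there exists a positive function p : Θ → ℝ such that for each z ∈ X the map t ↦ p(t)ψ(z,t) is decreasing on Θ. Then for all x, y ∈ X with ϑ₁(x) < ϑ₁(y), the map t ↦ −ψ(x,t)/ψ(y,t) is increasing on (ϑ₁(x), ϑ₁(y)). -/
open Set

/- Writing `-ψ(x,t)/ψ(y,t) = (-p(t)ψ(x,t)) / (p(t)ψ(y,t))`, between the two zeros the numerator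
is positive and increasing while the denominator is positive and decreasing. -/

theorem monotoneOn_neg_div_of_antitoneOn_mul {α 𝕜 : Type*} [Preorder α] [Field 𝕜] [LinearOrder 𝕜]
    [IsStrictOrderedRing 𝕜] {s : Set α} {p f g : α → 𝕜}
    (hp : ∀ t ∈ s, 0 < p t) (hf : ∀ t ∈ s, f t < 0) (hg : ∀ t ∈ s, 0 < g t)
    (hpf : AntitoneOn (fun t => p t * f t) s) (hpg : AntitoneOn (fun t => p t * g t) s) :
    MonotoneOn (fun t => -(f t / g t)) s := by
  have hquot : ∀ t ∈ s, -(f t / g t) = -(p t * f t) / (p t * g t) := fun t ht => by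
    rw [neg_div, mul_div_mul_left _ _ (hp t ht).ne']
  intro a ha b hb hab
  simp only [hquot a ha, hquot b hb]
  exact div_le_div₀ (neg_nonneg.2 (mul_neg_of_pos_of_neg (hp b hb) (hf b hb)).le)
    (neg_le_neg (hpf ha hb hab)) (mul_pos (hp b hb) (hg b hb)) (hpg ha hb hab)

theorem monotone_quotient_of_decreasing_product_general {X : Type*}
    (Θ : Set ℝ) (hord : Θ.OrdConnected)
    (ψ : X → ℝ → ℝ)
    (ϑ : X → ℝ) (hϑmem : ∀ x : X, ϑ x ∈ Θ)
    (hTpos : ∀ x : X, ∀ t ∈ Θ, t < ϑ x → 0 < ψ x t)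
    (hTneg : ∀ x : X, ∀ t ∈ Θ, ϑ x < t → ψ x t < 0)
    (p : ℝ → ℝ) (hp : ∀ t ∈ Θ, 0 < p t)
    (hdec : ∀ z : X, AntitoneOn (fun t => p t * ψ z t) Θ) :
    ∀ x y : X, ϑ x < ϑ y →
      MonotoneOn (fun t => -(ψ x t / ψ y t)) (Set.Ioo (ϑ x) (ϑ y)) := by
  intro x y _
  have hsub : Ioo (ϑ x) (ϑ y) ⊆ Θ := Ioo_subset_Icc_self.trans (hord.out (hϑmem x) (hϑmem y))
  exact monotoneOn_neg_div_of_antitoneOn_mul (fun t ht => hp t (hsub ht))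
    (fun t ht => hTneg x t (hsub ht) ht.1) (fun t ht => hTpos y t (hsub ht) ht.2)
    ((hdec x).mono hsub) ((hdec y).mono hsub)

/-- If `ψ` is a `Z₁`-function and there is a positive function `p` such that
`t ↦ p(t)ψ(z,t)` is decreasing on `Θ` for every `z`, then for all `x, y` with
`ϑ₁(x) < ϑ₁(y)` the map `t ↦ -ψ(x,t)/ψ(y,t)` is increasing on `(ϑ₁(x), ϑ₁(y))`. -/
theorem monotone_quotient_of_decreasing_product {X : Type*} [Nonempty X]
    (Θ : Set ℝ) (hopen : IsOpen Θ) (hord : Θ.OrdConnected)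
    (hnd : ∃ a ∈ Θ, ∃ b ∈ Θ, a ≠ b)
    (ψ : X → ℝ → ℝ)
    (ϑ : X → ℝ) (hϑmem : ∀ x : X, ϑ x ∈ Θ)
    (hTpos : ∀ x : X, ∀ t ∈ Θ, t < ϑ x → 0 < ψ x t)
    (hTneg : ∀ x : X, ∀ t ∈ Θ, ϑ x < t → ψ x t < 0)
    (hZ : ∀ x : X, ψ x (ϑ x) = 0)
    (p : ℝ → ℝ) (hp : ∀ t ∈ Θ, 0 < p t)
    (hdec : ∀ z : X, AntitoneOn (fun t => p t * ψ z t) Θ) :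
    ∀ x y : X, ϑ x < ϑ y →
      MonotoneOn (fun t => -(ψ x t / ψ y t)) (Set.Ioo (ϑ x) (ϑ y)) :=
  monotone_quotient_of_decreasing_product_general Θ hord ψ ϑ hϑmem hTpos hTneg p hp hdec
end

section
/- Suppose ψ is a Z₁-function, for each z ∈ X the map t ↦ ψ(z,t) is continuously differentiable on Θ \ {ϑ₁(z)}, and for each x, y ∈ X with ϑ₁(x) < ϑ₁(y) the map t ↦ −ψ(x,t)/ψ(y,t) is increasing on (ϑ₁(x), ϑ₁(y)). Then for all t ∈ Θ and all x, y ∈ X with ϑ₁(x) < t < ϑ₁(y), one has ∂₂ψ(y,t)/ψ(y,t) ≤ ∂₂ψ(x,t)/ψ(x,t). -/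
open Topology

/-!
Between the two zeros, `-ψ(x,·)/ψ(y,·)` is positive and increasing, so its logarithmic
derivative is nonnegative; that logarithmic derivative is `∂₂ψ(x,t)/ψ(x,t) - ∂₂ψ(y,t)/ψ(y,t)`.
-/

theorem logDeriv_nonneg_of_monotoneOn {g : ℝ → ℝ} {s : Set ℝ} {x : ℝ} (hg : MonotoneOn g s)
    (hs : s ∈ 𝓝 x) (hgx : 0 < g x) : 0 ≤ logDeriv g x := by
  rw [logDeriv_apply, ← derivWithin_of_mem_nhds hs]
  exact div_nonneg hg.derivWithin_nonneg hgx.le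

theorem logDeriv_neg_div {𝕜 𝕜' : Type*} [NontriviallyNormedField 𝕜]
    [NontriviallyNormedField 𝕜'] [NormedAlgebra 𝕜 𝕜'] {f g : 𝕜 → 𝕜'} {x : 𝕜}
    (hf : f x ≠ 0) (hg : g x ≠ 0) (hdf : DifferentiableAt 𝕜 f x)
    (hdg : DifferentiableAt 𝕜 g x) :
    logDeriv (fun t => -(f t / g t)) x = logDeriv f x - logDeriv g x := by
  have hneg : (fun t => -(f t / g t)) = fun t => f t / g t * (-1) :=
    funext fun t => (mul_neg_one _).symm
  rw [hneg, logDeriv_mul_const x _ (neg_ne_zero.mpr one_ne_zero),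
    logDeriv_div x hf hg hdf hdg]

theorem logDeriv_le_logDeriv_of_monotoneOn_neg_div {f g : ℝ → ℝ} {s : Set ℝ} {x : ℝ}
    (hmono : MonotoneOn (fun t => -(f t / g t)) s) (hs : s ∈ 𝓝 x)
    (hf : f x < 0) (hg : 0 < g x) (hdf : DifferentiableAt ℝ f x)
    (hdg : DifferentiableAt ℝ g x) :
    logDeriv g x ≤ logDeriv f x := by
  have hpos : 0 < -(f x / g x) := neg_pos.mpr (div_neg_of_neg_of_pos hf hg)
  have hlog := logDeriv_nonneg_of_monotoneOn hmono hs hpos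
  rw [logDeriv_neg_div hf.ne hg.ne' hdf hdg] at hlog
  linarith

theorem logderiv_ineq_general {X : Type*}
    (Θ : Set ℝ)
    (ψ : X → ℝ → ℝ)
    (ϑ : X → ℝ)
    (hTpos : ∀ x : X, ∀ t ∈ Θ, t < ϑ x → 0 < ψ x t)
    (hTneg : ∀ x : X, ∀ t ∈ Θ, ϑ x < t → ψ x t < 0)
    (hdiff : ∀ z : X, ∀ t ∈ Θ \ {ϑ z}, DifferentiableAt ℝ (ψ z) t)
    (hmono : ∀ x y : X, ϑ x < ϑ y →
      MonotoneOn (fun t => -(ψ x t / ψ y t)) (Set.Ioo (ϑ x) (ϑ y))) :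
    ∀ t ∈ Θ, ∀ x y : X, ϑ x < t → t < ϑ y →
      deriv (ψ y) t / ψ y t ≤ deriv (ψ x) t / ψ x t := by
  intro t htΘ x y hx hy
  exact logDeriv_le_logDeriv_of_monotoneOn_neg_div (hmono x y (hx.trans hy))
    (Ioo_mem_nhds hx hy) (hTneg x t htΘ hx) (hTpos y t htΘ hy)
    (hdiff x t ⟨htΘ, hx.ne'⟩) (hdiff y t ⟨htΘ, hy.ne⟩)

/-- If `ψ` is a `Z₁`-function, continuously differentiable in its second variable off
`ϑ₁(z)`, and the quotient map `t ↦ -ψ(x,t)/ψ(y,t)` is increasing on `(ϑ₁(x), ϑ₁(y))`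
whenever `ϑ₁(x) < ϑ₁(y)`, then for all `t ∈ Θ` and `x, y` with `ϑ₁(x) < t < ϑ₁(y)` one
has `∂₂ψ(y,t)/ψ(y,t) ≤ ∂₂ψ(x,t)/ψ(x,t)`. -/
theorem logderiv_ineq {X : Type*} [Nonempty X]
    (Θ : Set ℝ) (hopen : IsOpen Θ) (hord : Θ.OrdConnected)
    (hnd : ∃ a ∈ Θ, ∃ b ∈ Θ, a ≠ b)
    (ψ : X → ℝ → ℝ)
    (ϑ : X → ℝ) (hϑmem : ∀ x : X, ϑ x ∈ Θ)
    (hTpos : ∀ x : X, ∀ t ∈ Θ, t < ϑ x → 0 < ψ x t)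
    (hTneg : ∀ x : X, ∀ t ∈ Θ, ϑ x < t → ψ x t < 0)
    (hZ : ∀ x : X, ψ x (ϑ x) = 0)
    (hdiff : ∀ z : X, ∀ t ∈ Θ \ {ϑ z}, DifferentiableAt ℝ (ψ z) t)
    (hcontderiv : ∀ z : X, ContinuousOn (deriv (ψ z)) (Θ \ {ϑ z}))
    (hmono : ∀ x y : X, ϑ x < ϑ y →
      MonotoneOn (fun t => -(ψ x t / ψ y t)) (Set.Ioo (ϑ x) (ϑ y))) :
    ∀ t ∈ Θ, ∀ x y : X, ϑ x < t → t < ϑ y →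
      deriv (ψ y) t / ψ y t ≤ deriv (ψ x) t / ψ x t :=
  logderiv_ineq_general Θ ψ ϑ hTpos hTneg hdiff hmono
end
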